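/- Define V : [0,T] × C([−h,T], ℝⁿ) → ℝ by V(t, x(·)) = (M(t,x)² − ‖x(t)‖²)²/M(t,x)² + ‖x(t)‖² if M(t,x) > 0 and V(t,x(·)) = 0 if M(t,x) = 0, where M(t,x) = max_{τ∈[−h,t]} ‖x(τ)‖. Then V(t, x(·)) ≥ κ · M(t,x)² for all (t, x(·)), where κ = (3 − √5)/2. -/

import Mathlib

/-!
Writing `s = ‖x t‖² / M²`, the functional is `V = M² (1 - s + s²)`, and completing the square gives
`V = 3/4 · M² + (M²/2 - ‖x t‖²)² / M² ≥ 3/4 · M²`, while `(3 - √5)/2 ≤ 3/4` because `√5 ≥ 3/2`.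
-/

noncomputable section

/-- Running maximum of the Euclidean norm of the path `x` over `[-h, t]`. -/
def runMax (n : ℕ) (h t : ℝ) (x : ℝ → EuclideanSpace ℝ (Fin n)) : ℝ :=
  sSup ((fun τ => ‖x τ‖) '' Set.Icc (-h) t)

/-- The Lyapunov–Krasovskii functional `V`. -/
def Vfun (n : ℕ) (h t : ℝ) (x : ℝ → EuclideanSpace ℝ (Fin n)) : ℝ :=
  if 0 < runMax n h t x then
    ((runMax n h t x) ^ 2 - ‖x t‖ ^ 2) ^ 2 / (runMax n h t x) ^ 2 + ‖x t‖ ^ 2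
  else 0

lemma sq_sub_sq_sq_div_add_sq_eq {M : ℝ} (hM : M ≠ 0) (a : ℝ) :
    (M ^ 2 - a ^ 2) ^ 2 / M ^ 2 + a ^ 2 = 3 / 4 * M ^ 2 + (M ^ 2 / 2 - a ^ 2) ^ 2 / M ^ 2 := by
  field_simp
  ring

lemma three_quarters_mul_sq_le {M : ℝ} (hM : M ≠ 0) (a : ℝ) :
    3 / 4 * M ^ 2 ≤ (M ^ 2 - a ^ 2) ^ 2 / M ^ 2 + a ^ 2 := by
  rw [sq_sub_sq_sq_div_add_sq_eq hM]
  exact le_add_of_nonneg_right (by positivity)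

lemma three_sub_sqrt_five_div_two_le : (3 - Real.sqrt 5) / 2 ≤ 3 / 4 := by
  have : (3 / 2 : ℝ) ≤ Real.sqrt 5 := Real.le_sqrt_of_sq_le (by norm_num)
  linarith

lemma runMax_nonneg (n : ℕ) (h t : ℝ) (x : ℝ → EuclideanSpace ℝ (Fin n)) :
    0 ≤ runMax n h t x :=
  Real.sSup_nonneg (by rintro _ ⟨τ, -, rfl⟩; exact norm_nonneg _)

lemma three_quarters_mul_runMax_sq_le_Vfun (n : ℕ) (h t : ℝ) (x : ℝ → EuclideanSpace ℝ (Fin n)) :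
    3 / 4 * (runMax n h t x) ^ 2 ≤ Vfun n h t x := by
  unfold Vfun
  split_ifs with hpos
  · exact three_quarters_mul_sq_le hpos.ne' _
  · rw [le_antisymm (not_lt.mp hpos) (runMax_nonneg n h t x)]
    norm_num

theorem stmt1_general (n : ℕ) (h : ℝ)
    (x : ℝ → EuclideanSpace ℝ (Fin n))
    (t : ℝ) :
    (3 - Real.sqrt 5) / 2 * (runMax n h t x) ^ 2 ≤ Vfun n h t x :=
  calc (3 - Real.sqrt 5) / 2 * (runMax n h t x) ^ 2
      ≤ 3 / 4 * (runMax n h t x) ^ 2 :=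
        mul_le_mul_of_nonneg_right three_sub_sqrt_five_div_two_le (sq_nonneg _)
    _ ≤ Vfun n h t x := three_quarters_mul_runMax_sq_le_Vfun n h t x

theorem stmt1 (n : ℕ) (h T : ℝ) (hh : 0 < h) (hT : 0 < T)
    (x : ℝ → EuclideanSpace ℝ (Fin n)) (hx : ContinuousOn x (Set.Icc (-h) T))
    (t : ℝ) (ht : t ∈ Set.Icc 0 T) :
    (3 - Real.sqrt 5) / 2 * (runMax n h t x) ^ 2 ≤ Vfun n h t x :=
  stmt1_general n h x t
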